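/- arXiv:1811.06635 — 4 statements merged into one kernel-verified Lean document; each statement's English description precedes it below -/
import Mathlib

section
/- Fix n, d, s ∈ ℕ with n ≥ 1 and 3 ≤ s ≤ d. Assume n · log(e³s³/27) + log 2 ≤ (1/2) · log(2^s · C(d,s)). Then for every measurable estimator β̂ : ℝ^{n×d} × ℝ^n → ℝ^d, under the joint law in which β* is uniform on F₂(d,s) and X ∈ ℝ^{n×d} has i.i.d. entries uniform on {−1/√n, 1/√n} independent of β*, the probability that β̂(X, X·β*) ≠ β* is at least 1/2. -/
open MeasureTheory ProbabilityTheory Real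
open scoped ENNReal

/-- The two-point measure placing mass 1/2 on each of `-1/√n` and `1/√n`. -/
noncomputable def twoPointEntry (n : ℕ) : Measure ℝ :=
  (1 / 2 : ℝ≥0∞) • Measure.dirac (-(1 / Real.sqrt n)) +
    (1 / 2 : ℝ≥0∞) • Measure.dirac (1 / Real.sqrt n)

/-- The restricted ensemble `F₂(d,s)`: `s`-sparse vectors with entries in `{-1, 1}`
on a support of size `s`. -/
def F2 (d s : ℕ) : Set (Fin d → ℝ) :=
  {β | ∃ S : Finset (Fin d), S.card = s ∧
    (∀ i ∈ S, β i = -1 ∨ β i = 1) ∧ ∀ i ∉ S, β i = 0}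


/-! For a fixed sign matrix `X`, each measurement `(Xβ)ᵢ` with `β ∈ F₂(d,s)` is one of the
`2s + 1` values `k/√n`, `|k| ≤ s`, so `β ↦ Xβ` takes at most `(2s+1)ⁿ` values on `F₂(d,s)`.
An estimator can only be correct on a set of `β` on which `β ↦ Xβ` is injective, i.e. on at
most `(2s+1)ⁿ` of the `2ˢ C(d,s)` points, and the hypothesis on `n` makes this at most half of
them. Averaging over `X` gives the bound. -/

section SignVector

variable {ι : Type*} [DecidableEq ι]

def signVector (S T : Finset ι) (i : ι) : ℝ :=
  if i ∈ T then -1 else if i ∈ S then 1 else 0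

lemma signVector_eq_neg_one_iff {S T : Finset ι} {i : ι} : signVector S T i = -1 ↔ i ∈ T := by
  unfold signVector; split_ifs <;> norm_num [*]

lemma signVector_ne_zero_iff {S T : Finset ι} (hTS : T ⊆ S) {i : ι} :
    signVector S T i ≠ 0 ↔ i ∈ S := by
  unfold signVector
  split_ifs with hT hS
  · simp [hTS hT]
  · simp [hS]
  · simp [hS]

lemma signVector_injective_of_subset {S T S' T' : Finset ι} (hTS : T ⊆ S) (hTS' : T' ⊆ S')
    (h : signVector S T = signVector S' T') : S = S' ∧ T = T' := by
  constructor <;> ext i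
  · rw [← signVector_ne_zero_iff hTS, ← signVector_ne_zero_iff hTS', h]
  · rw [← signVector_eq_neg_one_iff (S := S), ← signVector_eq_neg_one_iff (S := S'), h]

end SignVector

/-- `(S, T)` encodes the vector with support `S` that equals `-1` exactly on `T`. -/
def signPatterns (d s : ℕ) : Finset (Σ _ : Finset (Fin d), Finset (Fin d)) :=
  (Finset.univ.powersetCard s).sigma Finset.powerset

lemma card_signPatterns (d s : ℕ) : (signPatterns d s).card = 2 ^ s * d.choose s := by
  rw [signPatterns, Finset.card_sigma, Finset.sum_congr rfl fun S hS => by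
    rw [Finset.card_powerset, (Finset.mem_powersetCard.1 hS).2]]
  simp [mul_comm]

lemma F2_eq_image_signPatterns (d s : ℕ) :
    F2 d s = (fun p : Σ _ : Finset (Fin d), Finset (Fin d) => signVector p.1 p.2) ''
      (signPatterns d s : Set _) := by
  ext β
  simp only [F2, signPatterns, Set.mem_ofPred_eq, Set.mem_image, Finset.coe_sigma,
    Set.mem_sigma_iff, Finset.mem_coe, Finset.mem_powersetCard, Finset.mem_powerset]
  constructor
  · rintro ⟨S, hcard, hpm, hzero⟩
    refine ⟨⟨S, S.filter (β · = -1)⟩,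
      ⟨⟨Finset.subset_univ S, hcard⟩, Finset.filter_subset _ _⟩, ?_⟩
    funext i
    by_cases hS : i ∈ S
    · rcases hpm i hS with h | h <;> norm_num [signVector, hS, h]
    · simp [signVector, hS, hzero i hS]
  · rintro ⟨⟨S, T⟩, ⟨⟨-, hcard⟩, hTS⟩, rfl⟩
    refine ⟨S, hcard, fun i hi => ?_, fun i hi => ?_⟩
    · unfold signVector; split_ifs <;> simp
    · simp [signVector, hi, show i ∉ T from fun h => hi (hTS h)]

lemma encard_F2 (d s : ℕ) : (F2 d s).encard = (2 ^ s * d.choose s : ℕ) := by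
  rw [F2_eq_image_signPatterns, Set.InjOn.encard_image, Set.encard_coe_eq_coe_finsetCard,
    card_signPatterns]
  rintro ⟨S, T⟩ hp ⟨S', T'⟩ hp' h
  simp only [signPatterns, Finset.coe_sigma, Set.mem_sigma_iff, Finset.mem_coe,
    Finset.mem_powerset] at hp hp'
  obtain ⟨rfl, rfl⟩ := signVector_injective_of_subset hp.2 hp'.2 h
  rfl

lemma Finset.exists_sum_eq_zsmul_of_forall_eq_neg_or_eq {ι M : Type*} [AddCommGroup M]
    (S : Finset ι) {t : ι → M} {c : M} (ht : ∀ j ∈ S, t j = -c ∨ t j = c) :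
    ∃ k : ℤ, |k| ≤ S.card ∧ ∑ j ∈ S, t j = k • c := by
  classical
  induction S using Finset.induction_on with
  | empty => exact ⟨0, by simp, by simp⟩
  | insert a S ha ih =>
    obtain ⟨k, hk, hsum⟩ := ih fun j hj => ht j (Finset.mem_insert_of_mem hj)
    rw [Finset.sum_insert ha, hsum, Finset.card_insert_of_notMem ha]
    rcases ht a (Finset.mem_insert_self a S) with h | h
    · refine ⟨k - 1, ?_, by rw [h, sub_zsmul, one_zsmul]; abel⟩
      push_cast; linarith [abs_sub k 1, abs_one (α := ℤ)]
    · refine ⟨k + 1, ?_, by rw [h, add_zsmul, one_zsmul]; abel⟩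
      push_cast; linarith [abs_add_le k 1, abs_one (α := ℤ)]

noncomputable def measurementLevels (c : ℝ) (s : ℕ) : Finset ℝ :=
  (Finset.Icc (-(s : ℤ)) s).image fun k => k • c

lemma card_measurementLevels_le (c : ℝ) (s : ℕ) : (measurementLevels c s).card ≤ 2 * s + 1 :=
  Finset.card_image_le.trans (by rw [Int.card_Icc]; omega)

lemma sum_mul_mem_measurementLevels {d s : ℕ} {c : ℝ} {x β : Fin d → ℝ}
    (hx : ∀ j, x j = -c ∨ x j = c) (hβ : β ∈ F2 d s) :
    ∑ j, x j * β j ∈ measurementLevels c s := by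
  obtain ⟨S, rfl, hpm, hzero⟩ := hβ
  have hterm : ∀ j ∈ S, x j * β j = -c ∨ x j * β j = c := fun j hj => by
    rcases hx j with h | h <;> rcases hpm j hj with h' | h' <;> simp [h, h']
  obtain ⟨k, hk, hsum⟩ := S.exists_sum_eq_zsmul_of_forall_eq_neg_or_eq hterm
  rw [← Finset.sum_subset S.subset_univ fun j _ hj => by rw [hzero j hj, mul_zero], hsum]
  exact Finset.mem_image_of_mem _ (Finset.mem_Icc.2 (abs_le.1 hk))

lemma encard_F2_recovered_le {n d s : ℕ} {c : ℝ} {X : Fin n → Fin d → ℝ}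
    (hX : ∀ i j, X i j = -c ∨ X i j = c) (g : (Fin n → ℝ) → Fin d → ℝ) :
    {β ∈ F2 d s | g (fun i => ∑ j, X i j * β j) = β}.encard ≤ ((2 * s + 1) ^ n : ℕ) := by
  calc _ ≤ (Fintype.piFinset fun _ : Fin n => measurementLevels c s : Set (Fin n → ℝ)).encard :=
        Set.encard_le_encard_of_injOn
          (fun β hβ => Fintype.mem_piFinset.2 fun i => sum_mul_mem_measurementLevels (hX i) hβ.1)
          (Set.LeftInvOn.injOn fun β hβ => hβ.2)
    _ ≤ _ := by
        rw [Set.encard_coe_eq_coe_finsetCard, Fintype.card_piFinset, Finset.prod_const,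
          Finset.card_univ, Fintype.card_fin, Nat.cast_le]
        exact Nat.pow_le_pow_left (card_measurementLevels_le c s) n

lemma two_mul_add_one_le_exp_one_pow_three_mul {x : ℝ} (hx : 3 ≤ x) :
    2 * x + 1 ≤ exp 1 ^ 3 * x ^ 3 / 27 := by
  have he : 2 ^ 3 ≤ exp 1 ^ 3 := by gcongr; linarith [add_one_le_exp 1]
  have hx3 : 9 * x ≤ x ^ 3 := by nlinarith [mul_le_mul hx hx (by norm_num) (by linarith)]
  nlinarith [mul_le_mul_of_nonneg_right he (by positivity : 0 ≤ x ^ 3)]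

lemma two_mul_pow_le_of_log_bound {n d s : ℕ} (hs3 : 3 ≤ s) (hsd : s ≤ d)
    (hbound : (n : ℝ) * log (exp 1 ^ 3 * (s : ℝ) ^ 3 / 27) + log 2 ≤
      (1 / 2) * log (2 ^ s * (d.choose s : ℝ))) :
    2 * (2 * s + 1) ^ n ≤ 2 ^ s * d.choose s := by
  have hM : (1 : ℝ) ≤ 2 ^ s * d.choose s := one_le_mul_of_one_le_of_one_le
    (one_le_pow₀ one_le_two) (mod_cast Nat.choose_pos hsd)
  have hlevels : log (2 * s + 1) ≤ log (exp 1 ^ 3 * (s : ℝ) ^ 3 / 27) :=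
    log_le_log (by positivity) (two_mul_add_one_le_exp_one_pow_three_mul (mod_cast hs3))
  suffices log (2 * (2 * s + 1) ^ n) ≤ log (2 ^ s * (d.choose s : ℝ)) by
    exact_mod_cast (log_le_log_iff (by positivity) (by positivity)).1 this
  calc log (2 * (2 * s + 1) ^ n) = n * log (2 * s + 1) + log 2 := by
        rw [log_mul two_ne_zero (by positivity), log_pow, add_comm]
    _ ≤ (1 / 2) * log (2 ^ s * (d.choose s : ℝ)) := by
        nlinarith [mul_le_mul_of_nonneg_left hlevels (Nat.cast_nonneg n)]
    _ ≤ log (2 ^ s * (d.choose s : ℝ)) := by linarith [log_nonneg hM]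

lemma uniformOn_F2_recovered_le_half {n d s : ℕ}
    (hcount : 2 * (2 * s + 1) ^ n ≤ 2 ^ s * d.choose s)
    {c : ℝ} {X : Fin n → Fin d → ℝ} (hX : ∀ i j, X i j = -c ∨ X i j = c)
    (g : (Fin n → ℝ) → Fin d → ℝ) :
    uniformOn (F2 d s) {β | g (fun i => ∑ j, X i j * β j) = β} ≤ 1 / 2 := by
  have hfin : (F2 d s).Finite := Set.finite_of_encard_eq_coe (encard_F2 d s)
  have hpos : 0 < 2 ^ s * d.choose s := lt_of_lt_of_le (by positivity) hcount
  rw [uniformOn, cond_apply hfin.measurableSet, Measure.count_apply hfin.measurableSet,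
    Measure.count_apply (hfin.subset Set.inter_subset_left).measurableSet, encard_F2,
    ENNReal.inv_mul_le_iff (by simpa using hpos.ne')
    (by simpa using ENNReal.natCast_ne_top (2 ^ s * d.choose s))]
  calc ((F2 d s ∩ {β | g (fun i => ∑ j, X i j * β j) = β}).encard : ℝ≥0∞)
      ≤ ((2 * s + 1) ^ n : ℕ) := by exact_mod_cast encard_F2_recovered_le hX g
    _ ≤ _ := by
        rw [ENat.toENNReal_coe, mul_one_div, ENNReal.le_div_iff_mul_le (by simp) (by simp)]
        exact_mod_cast (by linarith : (2 * s + 1) ^ n * 2 ≤ 2 ^ s * d.choose s)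

instance (n : ℕ) : IsProbabilityMeasure (twoPointEntry n) :=
  ⟨by simp [twoPointEntry, ENNReal.inv_two_add_inv_two]⟩

lemma ae_twoPointEntry (n : ℕ) :
    ∀ᵐ x ∂twoPointEntry n, x = -(1 / √n) ∨ x = 1 / √n := by
  simp [twoPointEntry, ae_dirac_eq]

lemma isProbabilityMeasure_uniformOn_F2 {d s : ℕ} (hsd : s ≤ d) :
    IsProbabilityMeasure (uniformOn (F2 d s)) :=
  isProbabilityMeasure_uniformOn (Set.finite_of_encard_eq_coe (encard_F2 d s))
    (Set.nonempty_of_encard_ne_zero (by simp [encard_F2, Nat.choose_pos hsd |>.ne']))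

lemma Measure.prod_apply_le_of_ae_le {α β : Type*} [MeasurableSpace α] [MeasurableSpace β]
    {μ : Measure α} {ν : Measure β} [SFinite μ] [IsProbabilityMeasure ν] {A : Set (α × β)}
    (hA : MeasurableSet A) {p : ℝ≥0∞} (h : ∀ᵐ y ∂ν, μ ((fun x => (x, y)) ⁻¹' A) ≤ p) :
    μ.prod ν A ≤ p := by
  rw [Measure.prod_apply_symm hA]
  calc _ ≤ ∫⁻ _, p ∂ν := lintegral_mono_ae h
    _ = p := by simp

theorem noiseless_standard_cs_lower_bound_general
    (n d s : ℕ) (hs3 : 3 ≤ s) (hsd : s ≤ d)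
    (hbound : (n : ℝ) * Real.log (Real.exp 1 ^ 3 * (s : ℝ) ^ 3 / 27) + Real.log 2 ≤
      (1 / 2) * Real.log (2 ^ s * (d.choose s : ℝ)))
    (est : (Fin n → Fin d → ℝ) × (Fin n → ℝ) → (Fin d → ℝ))
    (hest : Measurable est) :
    (1 / 2 : ℝ≥0∞) ≤
      ((uniformOn (F2 d s)).prod
          (Measure.pi fun _ : Fin n => Measure.pi fun _ : Fin d => twoPointEntry n))
        {ω : (Fin d → ℝ) × (Fin n → Fin d → ℝ) |
          est (ω.2, fun i => ∑ j, ω.2 i j * ω.1 j) ≠ ω.1} := by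
  have := isProbabilityMeasure_uniformOn_F2 hsd
  set recovered := {ω : (Fin d → ℝ) × (Fin n → Fin d → ℝ) |
    est (ω.2, fun i => ∑ j, ω.2 i j * ω.1 j) = ω.1}
  have hmeas : MeasurableSet recovered :=
    measurableSet_eq_fun (hest.comp (by fun_prop)) measurable_fst
  have hX : ∀ᵐ X ∂(Measure.pi fun _ : Fin n => Measure.pi fun _ : Fin d => twoPointEntry n),
      ∀ i j, X i j = -(1 / √n) ∨ X i j = 1 / √n :=
    Measure.ae_pi_le_pi <| Filter.eventually_pi fun _ => Measure.ae_pi_le_pi <|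
      Filter.eventually_pi fun _ => ae_twoPointEntry n
  have hrecovered : (uniformOn (F2 d s)).prod _ recovered ≤ 1 / 2 :=
    Measure.prod_apply_le_of_ae_le hmeas <| hX.mono fun X hX =>
    uniformOn_F2_recovered_le_half (two_mul_pow_le_of_log_bound hs3 hsd hbound) hX
      fun y => est (X, y)
  rw [← Set.compl_ofPred, prob_compl_eq_one_sub hmeas]
  calc (1 / 2 : ℝ≥0∞) = 1 - 1 / 2 := (ENNReal.sub_half ENNReal.one_ne_top).symm
    _ ≤ _ := tsub_le_tsub_left hrecovered 1

theorem noiseless_standard_cs_lower_bound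
    (n d s : ℕ) (hn : 1 ≤ n) (hs3 : 3 ≤ s) (hsd : s ≤ d)
    (hbound : (n : ℝ) * Real.log (Real.exp 1 ^ 3 * (s : ℝ) ^ 3 / 27) + Real.log 2 ≤
      (1 / 2) * Real.log (2 ^ s * (d.choose s : ℝ)))
    (est : (Fin n → Fin d → ℝ) × (Fin n → ℝ) → (Fin d → ℝ))
    (hest : Measurable est) :
    (1 / 2 : ℝ≥0∞) ≤
      ((uniformOn (F2 d s)).prod
          (Measure.pi fun _ : Fin n => Measure.pi fun _ : Fin d => twoPointEntry n))
        {ω : (Fin d → ℝ) × (Fin n → Fin d → ℝ) |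
          est (ω.2, fun i => ∑ j, ω.2 i j * ω.1 j) ≠ ω.1} :=
  noiseless_standard_cs_lower_bound_general n d s hs3 hsd hbound est hest
end

section
/- Let d, s ∈ ℕ and t > 0, and set v₁ = t/√2 and v₂ = v₁ + t. Suppose β¹, β² : Fin d → ℝ each have a support of size exactly s on which all values lie in {v₁, v₂} (and are 0 off the support). If β¹ ≠ β², then ‖β¹ − β²‖ ≥ t, where ‖·‖ is the Euclidean norm. -/
/-- The Euclidean (`ℓ₂`) norm of a vector. -/
noncomputable def l2norm {d : ℕ} (v : Fin d → ℝ) : ℝ := Real.sqrt (∑ i, v i ^ 2)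

/-- `s`-sparse vectors whose nonzero entries all lie in `{v₁, v₂}`. -/
def sparseTwoValued (d s : ℕ) (v₁ v₂ : ℝ) : Set (Fin d → ℝ) :=
  {β | ∃ S : Finset (Fin d), S.card = s ∧
    (∀ i ∈ S, β i = v₁ ∨ β i = v₂) ∧ ∀ i ∉ S, β i = 0}

theorem separation_noisy_ensemble (d s : ℕ) (t : ℝ) (ht : 0 < t)
    (v₁ v₂ : ℝ) (hv₁ : v₁ = t / Real.sqrt 2) (hv₂ : v₂ = v₁ + t)
    (β₁ β₂ : Fin d → ℝ)
    (hβ₁ : β₁ ∈ sparseTwoValued d s v₁ v₂) (hβ₂ : β₂ ∈ sparseTwoValued d s v₁ v₂)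
    (hne : β₁ ≠ β₂) :
    t ≤ l2norm (fun i => β₁ i - β₂ i) := by
  obtain ⟨S₁, hc₁, hval₁, hz₁⟩ := hβ₁
  obtain ⟨S₂, hc₂, hval₂, hz₂⟩ := hβ₂
  have hv₁pos : 0 < v₁ := by
    rw [hv₁]
    positivity
  have hv₁sq : v₁ ^ 2 = t ^ 2 / 2 := by
    rw [hv₁, div_pow, Real.sq_sqrt (by norm_num : (2:ℝ) ≥ 0)]
  have hnn : ∀ i, 0 ≤ (β₁ i - β₂ i) ^ 2 := fun i => sq_nonneg _
  rw [l2norm, show t = Real.sqrt (t^2) from (Real.sqrt_sq ht.le).symm]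
  apply Real.sqrt_le_sqrt
  by_cases hS : S₁ = S₂
  · -- same support, some coordinate differs by exactly t
    have : ∃ i, β₁ i ≠ β₂ i := by
      by_contra h
      push_neg at h
      exact hne (funext h)
    obtain ⟨i, hi⟩ := this
    have hiS : i ∈ S₁ := by
      by_contra h
      exact hi ((hz₁ i h).trans (hz₂ i (hS ▸ h)).symm)
    have hsq : t ^ 2 ≤ (β₁ i - β₂ i) ^ 2 := by
      rcases hval₁ i hiS with h1 | h1 <;> rcases hval₂ i (hS ▸ hiS) with h2 | h2 <;>
        rw [h1, h2] at hi ⊢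
      · exact absurd rfl hi
      · rw [hv₂]; ring_nf; nlinarith
      · rw [hv₂]; ring_nf; nlinarith
      · exact absurd rfl hi
    calc t ^ 2 ≤ (β₁ i - β₂ i) ^ 2 := hsq
      _ ≤ ∑ j, (β₁ j - β₂ j) ^ 2 :=
        Finset.single_le_sum (fun j _ => hnn j) (Finset.mem_univ i)
  · -- different supports of equal card: two witnesses, each contributing ≥ t²/2
    have h12 : (S₁ \ S₂).Nonempty := by
      rw [Finset.sdiff_nonempty]
      intro h
      exact hS (Finset.eq_of_subset_of_card_le h (by omega))
    have h21 : (S₂ \ S₁).Nonempty := by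
      rw [Finset.sdiff_nonempty]
      intro h
      exact hS (Finset.eq_of_subset_of_card_le h (by omega)).symm
    obtain ⟨i, hi⟩ := h12
    obtain ⟨j, hj⟩ := h21
    rw [Finset.mem_sdiff] at hi hj
    have hij : i ≠ j := fun h => hj.2 (h ▸ hi.1)
    have key : ∀ (b : Fin d → ℝ) (k : Fin d), b k = v₁ ∨ b k = v₂ →
        t ^ 2 / 2 ≤ b k ^ 2 := by
      intro b k hk
      rcases hk with h | h <;> rw [h]
      · rw [hv₁sq]
      · rw [hv₂]; nlinarith
    have hfi : t ^ 2 / 2 ≤ (β₁ i - β₂ i) ^ 2 := by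
      rw [hz₂ i hi.2, sub_zero]
      exact key β₁ i (hval₁ i hi.1)
    have hfj : t ^ 2 / 2 ≤ (β₁ j - β₂ j) ^ 2 := by
      rw [hz₁ j hj.2, zero_sub, neg_sq]
      exact key β₂ j (hval₂ j hj.1)
    have hsub : ∑ k ∈ ({i, j} : Finset (Fin d)), (β₁ k - β₂ k) ^ 2 ≤
        ∑ k, (β₁ k - β₂ k) ^ 2 :=
      Finset.sum_le_sum_of_subset_of_nonneg (Finset.subset_univ _)
        (fun k _ _ => hnn k)
    rw [Finset.sum_pair hij] at hsub
    linarith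
end

section
/- Let n ≥ 1 be a natural number, σ > 0, and ε ∈ (0,1). If e = (e₁,…,eₙ) is distributed according to the n-fold product of gaussianReal 0 σ² (i.e., the eᵢ are i.i.d. Gaussian with mean 0 and variance σ²), then P(Σ_{i=1}^n eᵢ² ≤ σ²n/(1−ε)) ≥ 1 − exp(−ε²n/4). -/
/-!
Chernoff bound with `t = ε / (2σ²)`: for `X ~ N(0, σ²)` one has `E exp (t X²) = (1 - ε)^(-1/2)`,
so `P(∑ eᵢ² ≥ σ²n/(1-ε)) ≤ (exp (-ε/(1-ε)) / (1-ε))^(n/2)`, and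
`(1 - ε)⁻¹ ≤ exp (ε/(1-ε) - ε²/2)` bounds this by `exp (-ε²n/4)`.
-/

open MeasureTheory ProbabilityTheory Real
open scoped ENNReal NNReal

lemma inv_one_sub_le_exp {ε : ℝ} (h0 : 0 ≤ ε) (h1 : ε < 1) :
    (1 - ε)⁻¹ ≤ exp (ε / (1 - ε) - ε ^ 2 / 2) := by
  have hpos : 0 < 1 - ε := by linarith
  set T := ε / (1 - ε) - ε ^ 2 / 2 with hT
  -- `T ≥ ε`, so the quadratic term `T ^ 2 / 2` of `exp T` absorbs the `- ε ^ 2 / 2` in `T`.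
  have hεT : ε ≤ T := by
    have : T - ε = ε ^ 2 * (1 + ε) / (2 * (1 - ε)) := by
      simp only [T]; field_simp; ring
    have : 0 ≤ T - ε := by rw [this]; positivity
    linarith
  calc (1 - ε)⁻¹ = 1 + ε / (1 - ε) := by field_simp; ring
    _ ≤ 1 + T + T ^ 2 / 2 := by nlinarith [pow_le_pow_left₀ h0 hεT 2]
    _ ≤ exp T := quadratic_le_exp_of_nonneg (h0.trans hεT)

lemma inv_sqrt_one_sub_le_exp {ε : ℝ} (h0 : 0 ≤ ε) (h1 : ε < 1) :
    (√(1 - ε))⁻¹ ≤ exp (ε / (2 * (1 - ε)) - ε ^ 2 / 4) := by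
  have : ε / (2 * (1 - ε)) - ε ^ 2 / 4 = (ε / (1 - ε) - ε ^ 2 / 2) / 2 := by
    rw [mul_comm, ← div_div]; ring
  rw [this, exp_half, ← sqrt_inv]
  exact sqrt_le_sqrt (inv_one_sub_le_exp h0 h1)

section
variable {E : Type*} {mE : MeasurableSpace E} {μ : Measure E}

lemma mgf_pi_sum_comp {ι : Type*} [Fintype ι] [SigmaFinite μ] (f : E → ℝ) (t : ℝ) :
    mgf (fun x : ι → E ↦ ∑ i, f (x i)) (Measure.pi fun _ ↦ μ) t = mgf f μ t ^ Fintype.card ι := by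
  simp only [mgf, Finset.mul_sum, exp_sum]
  exact integral_fintype_prod_eq_pow (fun x ↦ exp (t * f x))

lemma integrable_exp_mul_pi_sum_comp {ι : Type*} [Fintype ι] [SigmaFinite μ] {f : E → ℝ} {t : ℝ}
    (hf : Integrable (fun x ↦ exp (t * f x)) μ) :
    Integrable (fun x : ι → E ↦ exp (t * ∑ i, f (x i))) (Measure.pi fun _ ↦ μ) := by
  simp only [Finset.mul_sum, exp_sum]
  exact Integrable.fintype_prod fun _ ↦ hf
end

lemma gaussianPDFReal_zero_mul_exp_mul_sq (v : ℝ≥0) (t x : ℝ) :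
    gaussianPDFReal 0 v x * exp (t * x ^ 2) =
      (√(2 * π * v))⁻¹ * exp (-((1 - 2 * v * t) / (2 * v)) * x ^ 2) := by
  rcases eq_or_ne (v : ℝ) 0 with hv | hv
  · simp [gaussianPDFReal, hv]
  rw [gaussianPDFReal, mul_assoc, ← exp_add]
  congr 2
  field_simp
  ring

lemma mgf_sq_gaussianReal {v : ℝ≥0} (hv : v ≠ 0) {t : ℝ} (ht : 2 * v * t < 1) :
    mgf (fun x ↦ x ^ 2) (gaussianReal 0 v) t = (√(1 - 2 * v * t))⁻¹ := by
  have hb : 0 < (1 - 2 * v * t) / (2 * v) := div_pos (by linarith) (by positivity)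
  rw [mgf, integral_gaussianReal_eq_integral_smul hv]
  simp only [smul_eq_mul, gaussianPDFReal_zero_mul_exp_mul_sq]
  rw [integral_const_mul, integral_gaussian, div_div_eq_mul_div,
    show π * (2 * v) = 2 * π * v by ring, sqrt_div (by positivity), mul_div_assoc',
    inv_mul_cancel₀ (by positivity), one_div]

lemma integrable_exp_mul_sq_gaussianReal {v : ℝ≥0} (hv : v ≠ 0) {t : ℝ} (ht : 2 * v * t < 1) :
    Integrable (fun x ↦ exp (t * x ^ 2)) (gaussianReal 0 v) := by
  -- The Bochner integral computed in `mgf_sq_gaussianReal` is nonzero, which forces integrability.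
  refine Integrable.of_integral_ne_zero (?_ : mgf (fun x ↦ x ^ 2) (gaussianReal 0 v) t ≠ 0)
  rw [mgf_sq_gaussianReal hv ht]
  exact inv_ne_zero (sqrt_pos.2 (by linarith)).ne'

lemma measureReal_sum_sq_ge_le_exp {ι : Type*} [Fintype ι] {v : ℝ≥0} (hv : v ≠ 0) {ε : ℝ}
    (h0 : 0 ≤ ε) (h1 : ε < 1) :
    (Measure.pi fun _ : ι ↦ gaussianReal 0 v).real
        {e | v * Fintype.card ι / (1 - ε) ≤ ∑ i, e i ^ 2} ≤
      exp (-(ε ^ 2 * Fintype.card ι) / 4) := by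
  set n := Fintype.card ι
  set t := ε / (2 * v) with ht_def
  have ht : 2 * v * t = ε := by rw [ht_def]; field_simp
  have hmgf : mgf (fun e : ι → ℝ ↦ ∑ i, e i ^ 2) (Measure.pi fun _ ↦ gaussianReal 0 v) t =
      (√(1 - ε))⁻¹ ^ n := by
    rw [← ht, ← mgf_sq_gaussianReal hv (ht ▸ h1)]
    exact mgf_pi_sum_comp (fun x ↦ x ^ 2) t
  calc _ ≤ exp (-t * (v * n / (1 - ε))) * (√(1 - ε))⁻¹ ^ n := by
        rw [← hmgf]
        exact measure_ge_le_exp_mul_mgf _ (by positivity)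
          (integrable_exp_mul_pi_sum_comp (integrable_exp_mul_sq_gaussianReal hv (ht ▸ h1)))
    _ ≤ exp (-t * (v * n / (1 - ε))) * exp (ε / (2 * (1 - ε)) - ε ^ 2 / 4) ^ n := by
        gcongr
        exact inv_sqrt_one_sub_le_exp h0 h1
    _ = exp (-(ε ^ 2 * n) / 4) := by
        rw [← exp_nat_mul, ← exp_add]
        congr 1
        rw [ht_def]
        field_simp
        ring

lemma ofReal_one_sub_exp_le_measure_sum_sq_le {ι : Type*} [Fintype ι] {v : ℝ≥0} (hv : v ≠ 0)
    {ε : ℝ} (h0 : 0 ≤ ε) (h1 : ε < 1) :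
    ENNReal.ofReal (1 - exp (-(ε ^ 2 * Fintype.card ι) / 4)) ≤
      (Measure.pi fun _ : ι ↦ gaussianReal 0 v)
        {e | ∑ i, e i ^ 2 ≤ v * Fintype.card ι / (1 - ε)} := by
  have hmeas : MeasurableSet {e : ι → ℝ | v * Fintype.card ι / (1 - ε) ≤ ∑ i, e i ^ 2} :=
    measurableSet_le measurable_const (by fun_prop)
  rw [← ofReal_measureReal]
  refine ENNReal.ofReal_le_ofReal ?_
  calc 1 - exp (-(ε ^ 2 * Fintype.card ι) / 4)
      ≤ (Measure.pi fun _ : ι ↦ gaussianReal 0 v).real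
          {e | v * Fintype.card ι / (1 - ε) ≤ ∑ i, e i ^ 2}ᶜ := by
        rw [probReal_compl_eq_one_sub hmeas]
        linarith [measureReal_sum_sq_ge_le_exp (ι := ι) hv h0 h1]
    _ ≤ _ := by
        refine measureReal_mono fun e he ↦ ?_
        simp only [Set.mem_compl_iff, Set.mem_ofPred_eq, not_le] at he ⊢
        exact he.le

theorem chi_square_upper_tail_general (n : ℕ) (σ ε : ℝ) (hσ : 0 < σ)
    (hε0 : 0 < ε) (hε1 : ε < 1) :
    ENNReal.ofReal (1 - Real.exp (-(ε ^ 2 * (n : ℝ)) / 4)) ≤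
      (Measure.pi fun _ : Fin n => gaussianReal 0 ⟨σ ^ 2, sq_nonneg σ⟩)
        {e : Fin n → ℝ | ∑ i, e i ^ 2 ≤ σ ^ 2 * (n : ℝ) / (1 - ε)} := by
  have hv : (⟨σ ^ 2, sq_nonneg σ⟩ : ℝ≥0) ≠ 0 := NNReal.coe_ne_zero.1 (pow_pos hσ 2).ne'
  have := ofReal_one_sub_exp_le_measure_sum_sq_le (ι := Fin n) hv hε0.le hε1
  rwa [Fintype.card_fin] at this

theorem chi_square_upper_tail (n : ℕ) (hn : 1 ≤ n) (σ ε : ℝ) (hσ : 0 < σ)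
    (hε0 : 0 < ε) (hε1 : ε < 1) :
    ENNReal.ofReal (1 - Real.exp (-(ε ^ 2 * (n : ℝ)) / 4)) ≤
      (Measure.pi fun _ : Fin n => gaussianReal 0 ⟨σ ^ 2, sq_nonneg σ⟩)
        {e : Fin n → ℝ | ∑ i, e i ^ 2 ≤ σ ^ 2 * (n : ℝ) / (1 - ε)} :=
  chi_square_upper_tail_general n σ ε hσ hε0 hε1
end

section
/- Let m ∈ ℕ and let A, B be m×m real matrices that are both positive definite. Then log(det A) + trace(A⁻¹ · B) ≥ log(det B) + m, where log is the natural logarithm. Equivalently, over positive definite A the function A ↦ log(det A) + trace(A⁻¹B) is minimized at A = B, where its value is log(det B) + m. -/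
/-!
Write `A⁻¹ = Yᴴ Y` with `Y` invertible. Then `M = Y B Yᴴ` is positive definite, with
`det M = det B / det A` and `trace M = trace (A⁻¹ B)`, so the inequality becomes
`log det M ≤ trace M - m`: the sum over the eigenvalues `λ > 0` of `M` of `log λ ≤ λ - 1`.
-/

open Matrix

namespace Matrix

variable {n : Type*} [Fintype n] [DecidableEq n]

theorem PosDef.log_det_le_trace_sub_card {M : Matrix n n ℝ} (hM : M.PosDef) :
    Real.log M.det ≤ M.trace - Fintype.card n := by
  have hH := hM.isHermitian
  have hdet : M.det = ∏ i, hH.eigenvalues i := by simpa using hH.det_eq_prod_eigenvalues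
  have htrace : M.trace = ∑ i, hH.eigenvalues i := by simpa using hH.trace_eq_sum_eigenvalues
  rw [hdet, htrace, Real.log_prod fun i _ => (hM.eigenvalues_pos i).ne']
  calc ∑ i, Real.log (hH.eigenvalues i)
      ≤ ∑ i, (hH.eigenvalues i - 1) :=
        Finset.sum_le_sum fun i _ => Real.log_le_sub_one_of_pos (hM.eigenvalues_pos i)
    _ = ∑ i, hH.eigenvalues i - Fintype.card n := by simp [Finset.sum_sub_distrib]

open scoped MatrixOrder in
theorem PosDef.log_det_add_card_le_log_det_add_trace_inv_mul {A B : Matrix n n ℝ}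
    (hA : A.PosDef) (hB : B.PosDef) :
    Real.log B.det + Fintype.card n ≤ Real.log A.det + (A⁻¹ * B).trace := by
  obtain ⟨Y, hY, hAinv⟩ :=
    CStarAlgebra.isStrictlyPositive_iff_eq_star_mul_self.mp hA.inv.isStrictlyPositive
  have hM : (Y * B * star Y).PosDef := hY.posDef_star_right_conjugate_iff.mpr hB
  have hdet : (Y * B * star Y).det = A.det⁻¹ * B.det := by
    have hAinv_det : A.det⁻¹ = (star Y).det * Y.det := by
      rw [← Ring.inverse_eq_inv, ← det_nonsing_inv, hAinv, det_mul]
    rw [hAinv_det, det_mul, det_mul]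
    ring
  have htrace : (Y * B * star Y).trace = (A⁻¹ * B).trace := by
    rw [trace_mul_cycle, hAinv]
  have key := hM.log_det_le_trace_sub_card
  rw [hdet, htrace, Real.log_mul (inv_ne_zero hA.det_pos.ne') hB.det_pos.ne', Real.log_inv] at key
  linarith

end Matrix

theorem logdet_trace_min (m : ℕ) (A B : Matrix (Fin m) (Fin m) ℝ)
    (hA : A.PosDef) (hB : B.PosDef) :
    Real.log B.det + (m : ℝ) ≤ Real.log A.det + (A⁻¹ * B).trace ∧
      Real.log B.det + (B⁻¹ * B).trace = Real.log B.det + (m : ℝ) := by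
  refine ⟨by simpa using hA.log_det_add_card_le_log_det_add_trace_inv_mul hB, ?_⟩
  rw [nonsing_inv_mul B ((isUnit_iff_isUnit_det B).mp hB.isUnit), trace_one, Fintype.card_fin]
end
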